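/- arXiv:1402.7289 — 2 statements merged into one kernel-verified Lean document; each statement's English description precedes it below -/
import Mathlib

section
/- Let n ≥ 1 and let S be a subsemigroup of T_n consisting only of nonpermutational transformations; for i ∈ {1,…,n} let S_i = {f ∈ S : the unique fixed point of f is i}. Suppose that for all i < j and k < ℓ with i ≠ k there exists f ∈ S_n with if = j and kf = ℓ. Then |S| ≤ Σ_{i=1}^{n} (n−1)!/(n−i)! = (n−1)!·Σ_{j=0}^{n−1} 1/j!, i.e., |S| ≤ ⌊e·(n−1)!⌋. -/
/-- A transformation `f` of `Fin n` is *nonpermutational* if every nonempty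
subset `X` with `X.image f = X` is a singleton. -/
def Nonpermutational {n : ℕ} (f : Fin n → Fin n) : Prop :=
  ∀ X : Finset (Fin n), X.Nonempty → X.image f = X → X.card = 1

/-- `FixIs f i` says that `i` is the unique fixed point of `f`. -/
def FixIs {n : ℕ} (f : Fin n → Fin n) (i : Fin n) : Prop :=
  f i = i ∧ ∀ j, f j = j → j = i


/-
Fix `f ∈ S` with fixed point `p`, and write `t` for the top element. Composing `f` with a
suitable `g ∈ S` that fixes `t` (supplied by the richness hypothesis) would produce an element
of `S` with two fixed points or a 2-cycle unless `f` has a rigid shape: `f t = p`, every `x > p`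
is sent to `p`, and every `x < p` is sent strictly upwards. (For `f t = p` one also needs that
every orbit of `f` ends in `p`, so an orbit starting above `p` must descend somewhere.) There are
`(n - 1)(n - 2)⋯(n - p)` maps of this shape, and summing over `p` gives
`∑ (n - 1)! / j! ≤ ⌊e (n - 1)!⌋`.
-/

open Finset Function

namespace Nonpermutational

variable {n : ℕ} {f : Fin n → Fin n}

theorem eq_of_image_pair (hf : Nonpermutational f) {a b : Fin n}
    (h : ({a, b} : Finset (Fin n)).image f = {a, b}) : a = b := by
  by_contra hab
  have := hf {a, b} (insert_nonempty a {b}) h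
  rw [card_pair_eq_two_iff.2 hab] at this
  omega

theorem eq_of_isFixedPt (hf : Nonpermutational f) {a b : Fin n} (ha : IsFixedPt f a)
    (hb : IsFixedPt f b) : a = b :=
  hf.eq_of_image_pair (by rw [image_insert, image_singleton, ha.eq, hb.eq])

theorem eq_of_swap (hf : Nonpermutational f) {a b : Fin n} (ha : f a = b) (hb : f b = a) :
    a = b :=
  hf.eq_of_image_pair (by rw [image_insert, image_singleton, ha, hb, pair_comm])

theorem isFixedPt_of_isPeriodicPt (hf : Nonpermutational f) {k : ℕ} {x : Fin n} (hk : 0 < k)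
    (hx : IsPeriodicPt f k x) : IsFixedPt f x := by
  set X := (range k).image (f^[·] x)
  have mem_X (i : ℕ) : f^[i] x ∈ X :=
    mem_image.2 ⟨i % k, mem_range.2 (Nat.mod_lt i hk), hx.iterate_mod_apply i⟩
  have hX : X.image f = X := by
    refine Subset.antisymm (image_subset_iff.2 ?_) fun y hy => ?_
    · simp only [X, forall_mem_image]
      intro i _
      rw [← iterate_succ_apply' f]
      exact mem_X _
    · obtain ⟨i, -, rfl⟩ := mem_image.1 hy
      refine mem_image.2 ⟨f^[i + k - 1] x, mem_X _, ?_⟩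
      rw [← iterate_succ_apply' f, Nat.succ_eq_add_one, Nat.sub_add_cancel (by omega),
        iterate_add_apply, hx.eq]
  exact card_le_one.1 (hf X ⟨x, mem_X 0⟩ hX).le _ (mem_X 1) _ (mem_X 0)

theorem exists_isFixedPt_iterate (hf : Nonpermutational f) (x : Fin n) :
    ∃ k, IsFixedPt f (f^[k] x) := by
  obtain ⟨i, j, hij, he⟩ := Finite.exists_ne_map_eq_of_infinite (f^[·] x)
  wlog h : i < j generalizing i j
  · exact this j i hij.symm he.symm (by omega)
  refine ⟨i, hf.isFixedPt_of_isPeriodicPt (Nat.sub_pos_of_lt h) ?_⟩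
  change f^[j - i] (f^[i] x) = f^[i] x
  rw [← iterate_add_apply, Nat.sub_add_cancel h.le]
  exact he.symm

theorem exists_iterate_eq (hf : Nonpermutational f) {p : Fin n} (hp : IsFixedPt f p)
    (x : Fin n) : ∃ k, f^[k] x = p :=
  let ⟨k, hk⟩ := hf.exists_isFixedPt_iterate x
  ⟨k, hf.eq_of_isFixedPt hk hp⟩

end Nonpermutational

def climbingTo {n : ℕ} (p : Fin n) : Finset (Fin n → Fin n) :=
  Fintype.piFinset fun x => if x < p then Ioi x else {p}

theorem card_climbingTo {n : ℕ} (p : Fin n) : #(climbingTo p) = (n - 1).descFactorial p := by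
  have hfactor (x : Fin n) :
      #(if x < p then Ioi x else {p}) = if (x : ℕ) < p then n - 1 - x else 1 := by
    simp only [Fin.lt_def]
    split_ifs <;> simp
  rw [climbingTo, Fintype.card_piFinset, prod_congr rfl fun x _ => hfactor x,
    Fin.prod_univ_eq_prod_range (fun i => if i < p then n - 1 - i else 1), prod_ite,
    prod_const_one, mul_one, Nat.descFactorial_eq_prod_range]
  congr 1
  ext i
  simpa using fun hi : i < p => hi.trans p.isLt

section Rich

variable {m : ℕ} {S : Finset (Fin (m + 1) → Fin (m + 1))}
  (hclosed : ∀ f ∈ S, ∀ g ∈ S, (fun x => g (f x)) ∈ S)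
  (hnp : ∀ f ∈ S, Nonpermutational f)
  (hrich : ∀ i j k l : Fin (m + 1), i < j → k < l → i ≠ k →
    ∃ g ∈ S, IsFixedPt g (Fin.last m) ∧ g i = j ∧ g k = l)
  {f : Fin (m + 1) → Fin (m + 1)} {p : Fin (m + 1)}

include hrich in
theorem exists_mem_apply_eq_and_apply_eq_last {i j k : Fin (m + 1)} (hij : i < j)
    (hj : j < Fin.last m) (hik : i ≠ k) : ∃ g ∈ S, g i = j ∧ g k = Fin.last m := by
  rcases (Fin.le_last k).lt_or_eq with hk | rfl
  · obtain ⟨g, hg, -, hgi, hgk⟩ := hrich i j k _ hij hk hik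
    exact ⟨g, hg, hgi, hgk⟩
  · obtain ⟨g, hg, hlast, hgi, -⟩ := hrich i j j _ hij hj hij.ne
    exact ⟨g, hg, hgi, hlast⟩

include hclosed hnp hrich

theorem apply_eq_apply_last_of_apply_lt (hf : f ∈ S) {x : Fin (m + 1)} (hx : f x < x)
    (hlast : f (Fin.last m) < Fin.last m) : f x = f (Fin.last m) := by
  by_contra hne
  obtain ⟨g, hg, -, hgx, hglast⟩ := hrich _ _ _ _ hx hlast hne
  have hx_last : x = Fin.last m := (hnp _ (hclosed f hf g hg)).eq_of_isFixedPt hgx hglast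
  exact hne (by rw [hx_last])

theorem apply_last_eq (hf : f ∈ S) (hp : IsFixedPt f p) : f (Fin.last m) = p := by
  by_contra hne
  have hp_last : p < Fin.last m := (Fin.le_last p).lt_of_ne fun h => hne (h ▸ hp)
  have hlast : f (Fin.last m) < Fin.last m :=
    (Fin.le_last _).lt_of_ne fun h => hne (h.trans ((hnp f hf).eq_of_isFixedPt h hp))
  rcases Ne.lt_or_gt hne with hlt | hgt
  · obtain ⟨g, hg, hgy, hgp⟩ := exists_mem_apply_eq_and_apply_eq_last hrich hlt hp_last hlt.ne
    exact hp_last.ne ((hnp _ (hclosed f hf g hg)).eq_of_swap (by rw [hp.eq, hgp]) hgy)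
  · set y := f (Fin.last m)
    obtain ⟨N, hN⟩ := (hnp f hf).exists_iterate_eq hp y
    -- the orbit of `y` ends in `p < y`, so it descends somewhere; that descent must land on `y`
    obtain ⟨k, hk⟩ : ∃ k, f (f^[k] y) < f^[k] y := by
      by_contra! h
      have hmono : Monotone (f^[·] y) := monotone_nat_of_le_succ fun k => by
        simpa only [iterate_succ_apply'] using h k
      have := hmono (Nat.zero_le N)
      simp only [iterate_zero_apply, hN] at this
      exact this.not_gt hgt
    have hper : IsPeriodicPt f (k + 1) y := by
      rw [IsPeriodicPt, IsFixedPt, iterate_succ_apply',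
        apply_eq_apply_last_of_apply_lt hclosed hnp hrich hf hk hlast]
    exact hgt.ne' ((hnp f hf).eq_of_isFixedPt
      ((hnp f hf).isFixedPt_of_isPeriodicPt k.succ_pos hper) hp)

theorem apply_eq_of_apply_lt (hf : f ∈ S) (hp : IsFixedPt f p) {x : Fin (m + 1)}
    (hx : f x < x) : f x = p := by
  have hlast := apply_last_eq hclosed hnp hrich hf hp
  by_contra hne
  have hx_last : x < Fin.last m := (Fin.le_last x).lt_of_ne fun h => hne (h ▸ hlast)
  obtain ⟨g, hg, hgx, hgp⟩ := exists_mem_apply_eq_and_apply_eq_last hrich hx hx_last hne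
  exact hx_last.ne ((hnp _ (hclosed f hf g hg)).eq_of_isFixedPt hgx
    (show g (f (Fin.last m)) = Fin.last m by rw [hlast, hgp]))

theorem apply_eq_of_lt (hf : f ∈ S) (hp : IsFixedPt f p) {x : Fin (m + 1)} (hx : p < x) :
    f x = p := by
  rcases lt_trichotomy (f x) x with hlt | heq | hgt
  · exact apply_eq_of_apply_lt hclosed hnp hrich hf hp hlt
  · exact absurd ((hnp f hf).eq_of_isFixedPt heq hp) hx.ne'
  · have hx_last : x < Fin.last m := hgt.trans_le (Fin.le_last _)
    obtain ⟨g, hg, hgp, hgx⟩ :=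
      exists_mem_apply_eq_and_apply_eq_last hrich hx hx_last (hx.trans hgt).ne
    exact absurd ((hnp _ (hclosed f hf g hg)).eq_of_swap hgx
      (by rw [apply_last_eq hclosed hnp hrich hf hp, hgp])) hx_last.ne

theorem lt_apply_of_lt (hf : f ∈ S) (hp : IsFixedPt f p) {x : Fin (m + 1)} (hx : x < p) :
    x < f x := by
  rcases lt_trichotomy (f x) x with hlt | heq | hgt
  · exact absurd (apply_eq_of_apply_lt hclosed hnp hrich hf hp hlt ▸ hlt) hx.not_gt
  · exact absurd ((hnp f hf).eq_of_isFixedPt heq hp) hx.ne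
  · exact hgt

theorem mem_climbingTo_of_isFixedPt (hf : f ∈ S) (hp : IsFixedPt f p) :
    f ∈ climbingTo p := by
  rw [climbingTo, Fintype.mem_piFinset]
  intro x
  split_ifs with hx
  · exact mem_Ioi.2 (lt_apply_of_lt hclosed hnp hrich hf hp hx)
  · rcases (not_lt.1 hx).eq_or_lt with rfl | hpx
    · exact mem_singleton.2 hp.eq
    · exact mem_singleton.2 (apply_eq_of_lt hclosed hnp hrich hf hp hpx)

theorem card_le_sum_descFactorial :
    #S ≤ ∑ i ∈ range (m + 1), m.descFactorial i := by
  calc #S ≤ #(univ.biUnion climbingTo) := card_le_card fun f hf => by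
        obtain ⟨k, hk⟩ := (hnp f hf).exists_isFixedPt_iterate 0
        exact mem_biUnion.2 ⟨_, mem_univ _, mem_climbingTo_of_isFixedPt hclosed hnp hrich hf hk⟩
    _ ≤ ∑ p, #(climbingTo p) := card_biUnion_le
    _ = ∑ i ∈ range (m + 1), m.descFactorial i := by
        simp only [card_climbingTo, Nat.add_sub_cancel]
        exact Fin.sum_univ_eq_sum_range _ _

end Rich

theorem sum_range_descFactorial_eq_sum_factorial_div (m : ℕ) :
    ∑ i ∈ range (m + 1), m.descFactorial i = ∑ j ∈ range (m + 1), m.factorial / j.factorial := by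
  rw [← sum_range_reflect]
  refine sum_congr rfl fun i hi => ?_
  have hi : i ≤ m := Nat.lt_succ_iff.1 (mem_range.1 hi)
  rw [Nat.add_sub_cancel, Nat.descFactorial_eq_div (Nat.sub_le m i), Nat.sub_sub_self hi]

theorem sum_range_factorial_div_le_floor_exp_mul (m k : ℕ) :
    ∑ j ∈ range k, m.factorial / j.factorial ≤ ⌊Real.exp 1 * m.factorial⌋₊ := by
  refine Nat.le_floor ?_
  push_cast
  calc ∑ j ∈ range k, ((m.factorial / j.factorial : ℕ) : ℝ)
      ≤ ∑ j ∈ range k, (1 : ℝ) ^ j / j.factorial * m.factorial :=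
        sum_le_sum fun j _ => by rw [one_pow, one_div_mul_eq_div]; exact Nat.cast_div_le
    _ = (∑ j ∈ range k, (1 : ℝ) ^ j / j.factorial) * m.factorial := (sum_mul ..).symm
    _ ≤ Real.exp 1 * m.factorial := by gcongr; exact Real.sum_le_exp_of_nonneg zero_le_one k

/-- Let `S` be a subsemigroup of `T_n` (composition acting on the right)
consisting of nonpermutational transformations, with `S_i` the set of members
having unique fixed point `i`, and suppose that for all `i < j` and `k < l`
with `i ≠ k` some `f ∈ S_n` has `f i = j` and `f k = l` (the top element
`⟨n-1,_⟩` of `Fin n` playing the role of `n`).  Then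
`|S| ≤ Σ_{i=1}^{n} (n-1)!/(n-i)! = Σ_{j=0}^{n-1} (n-1)!/j! = ⌊e·(n-1)!⌋`. -/
theorem card_le_floor_e_factorial
    (n : ℕ) (hn : 1 ≤ n) (S : Finset (Fin n → Fin n))
    (hclosed : ∀ f ∈ S, ∀ g ∈ S, (fun x => g (f x)) ∈ S)
    (hnp : ∀ f ∈ S, Nonpermutational f)
    (hrich : ∀ i j k l : Fin n, i < j → k < l → i ≠ k →
      ∃ f ∈ S, FixIs f (⟨n - 1, by omega⟩ : Fin n) ∧ f i = j ∧ f k = l) :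
    S.card ≤ ∑ j ∈ Finset.range n, Nat.factorial (n - 1) / Nat.factorial j ∧
    S.card ≤ Nat.floor (Real.exp 1 * (Nat.factorial (n - 1) : ℝ)) := by
  obtain ⟨m, rfl⟩ : ∃ m, n = m + 1 := ⟨n - 1, by omega⟩
  have hcard : #S ≤ ∑ j ∈ range (m + 1), m.factorial / j.factorial := by
    rw [← sum_range_descFactorial_eq_sum_factorial_div]
    refine card_le_sum_descFactorial hclosed hnp fun i j k l hij hkl hik => ?_
    obtain ⟨f, hf, hfix, hfi, hfk⟩ := hrich i j k l hij hkl hik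
    exact ⟨f, hf, hfix.1, hfi, hfk⟩
  exact ⟨hcard, hcard.trans (sum_range_factorial_div_le_floor_exp_mul m _)⟩
end

section
/- Let A = (Q, Σ, δ, q₀, F) be a finite deterministic automaton that is connected and reduced. Then A avoids the pattern P_g (there do not exist distinct states p, q and nonempty words x, y with δ*(p,x) = p, δ*(q,x) = q, δ*(p,y) = q) if and only if every nontrivial component of A is a sink and for every nonempty word u ∈ Σ⁺ and every sink C of A the restriction of the transformation q ↦ δ*(q,u) to C is a nonpermutational transformation of C. -/
/-- Every state of `M` is reachable from the start state. -/
def DFA.Connected {α σ : Type*} (M : DFA α σ) : Prop :=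
  ∀ q : σ, ∃ u : List α, M.evalFrom M.start u = q

/-- `M` is reduced: connected, and any two distinct states are distinguishable
by some word. -/
def DFA.Reduced {α σ : Type*} (M : DFA α σ) : Prop :=
  M.Connected ∧ ∀ p q : σ, p ≠ q →
    ∃ u : List α, ¬(M.evalFrom p u ∈ M.accept ↔ M.evalFrom q u ∈ M.accept)

/-- `M` admits the pattern `P_g`: distinct states `p, q` and nonempty words
`x, y` with `px = p`, `qx = q` and `py = q`. -/
def DFA.AdmitsPg {α σ : Type*} (M : DFA α σ) : Prop :=
  ∃ (p q : σ) (x y : List α), p ≠ q ∧ x ≠ [] ∧ y ≠ [] ∧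
    M.evalFrom p x = p ∧ M.evalFrom q x = q ∧ M.evalFrom p y = q

/-- `q` is reachable from `p`. -/
def DFA.Reach {α σ : Type*} (M : DFA α σ) (p q : σ) : Prop :=
  ∃ u : List α, M.evalFrom p u = q

/-- The component (class of the mutual-reachability equivalence) of `q`. -/
def DFA.component {α σ : Type*} (M : DFA α σ) (q : σ) : Set σ :=
  {p | M.Reach p q ∧ M.Reach q p}

/-- A component is trivial if it is a singleton `{p}` with no loop `p a = p`. -/
def DFA.TrivialComponent {α σ : Type*} (M : DFA α σ) (C : Set σ) : Prop :=
  ∃ p : σ, C = {p} ∧ ∀ a : α, M.step p a ≠ p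

/-- A set of states is a sink if it is closed under all transitions. -/
def DFA.IsSink {α σ : Type*} (M : DFA α σ) (C : Set σ) : Prop :=
  ∀ p ∈ C, ∀ a : α, M.step p a ∈ C

/-!
Some positive power of every element of a finite monoid is idempotent, so every nonempty word `x`
has a nonempty power `w = xⁿ` whose transformation fixes its own image pointwise.

If a letter `a` leads out of a state `p` carrying a loop `x`, then `w` fixes `p` and the state
`s = p a w`, which is reachable from `p`; avoiding `P_g` forces `s = p`, so `p a` stays in the
component of `p`. If a nonempty word `u` maps a subset `X` of a component onto itself, so does the
idempotent power of `u`, which therefore fixes `X` pointwise; two distinct states of `X` are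
mutually reachable and would form a `P_g`. Conversely, a `P_g` on `p, q` lies in the component of
`p`, which is nontrivial and hence a sink, and there `x` maps `{p, q}` onto itself.
-/

theorem exists_isIdempotentElem_pow {M : Type*} [Monoid M] [Finite M] (a : M) :
    ∃ n ≠ 0, IsIdempotentElem (a ^ n) := by
  obtain ⟨i, j, hij, hpow⟩ := Finite.exists_ne_map_eq_of_infinite (a ^ · : ℕ → M)
  wlog hlt : i < j generalizing i j
  · exact this j i hij.symm hpow.symm (by omega)
  -- past the preperiod `i`, powers of `a` repeat with period `j - i`
  have hshift : ∀ t m, i ≤ m → a ^ (m + t * (j - i)) = a ^ m := by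
    intro t m hm
    induction t with
    | zero => simp
    | succ t ih =>
      calc a ^ (m + (t + 1) * (j - i)) = a ^ (m + t * (j - i) - i) * a ^ j := by
            rw [← pow_add]; congr 1; rw [Nat.succ_mul]; omega
        _ = a ^ (m + t * (j - i)) := by
            rw [← hpow, ← pow_add]; congr 1; omega
        _ = a ^ m := ih
  have hle : i + 1 ≤ (i + 1) * (j - i) := Nat.le_mul_of_pos_right _ (by omega)
  refine ⟨(i + 1) * (j - i), by omega, ?_⟩
  rw [IsIdempotentElem, ← pow_add]
  exact hshift _ _ (by omega)

theorem Function.exists_iterate_idempotent {α : Type*} [Finite α] (f : α → α) :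
    ∃ n ≠ 0, ∀ x, f^[n] (f^[n] x) = f^[n] x := by
  have : Finite (Function.End α) := inferInstanceAs (Finite (α → α))
  obtain ⟨n, hn, hidem⟩ := exists_isIdempotentElem_pow (show Function.End α from f)
  exact ⟨n, hn, congrFun hidem⟩

theorem List.flatten_replicate_ne_nil {α : Type*} {x : List α} (hx : x ≠ []) {n : ℕ}
    (hn : n ≠ 0) : (List.replicate n x).flatten ≠ [] := by
  simp [hx, hn]

namespace DFA

variable {α σ : Type*} (M : DFA α σ)

theorem evalFrom_flatten_replicate (s : σ) (x : List α) (n : ℕ) :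
    M.evalFrom s (List.replicate n x).flatten = (M.evalFrom · x)^[n] s := by
  induction n generalizing s with
  | zero => rfl
  | succ n ih =>
    rw [List.replicate_succ, List.flatten_cons, evalFrom_of_append, ih,
      Function.iterate_succ_apply]

variable {M}

theorem Reach.trans {p q r : σ} (hpq : M.Reach p q) (hqr : M.Reach q r) : M.Reach p r := by
  obtain ⟨u, rfl⟩ := hpq
  obtain ⟨v, rfl⟩ := hqr
  exact ⟨u ++ v, evalFrom_of_append _ _ _ _⟩

theorem mem_component_self (p : σ) : p ∈ M.component p :=
  ⟨⟨[], rfl⟩, ⟨[], rfl⟩⟩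

theorem IsSink.evalFrom_mem {C : Set σ} (hC : M.IsSink C) {p : σ} (hp : p ∈ C) (w : List α) :
    M.evalFrom p w ∈ C := by
  induction w generalizing p with
  | nil => exact hp
  | cons a w ih => exact ih (hC p hp a)

theorem exists_loop_of_not_trivialComponent {p q : σ} (hp : p ∈ M.component q)
    (hnt : ¬ M.TrivialComponent (M.component q)) : ∃ x ≠ [], M.evalFrom p x = p := by
  by_cases hC : M.component q = {p}
  · obtain ⟨a, ha⟩ : ∃ a, M.step p a = p := by
      by_contra! hloop
      exact hnt ⟨p, hC, hloop⟩
    exact ⟨[a], List.cons_ne_nil _ _, ha⟩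
  · obtain ⟨r, hr, hrp⟩ : ∃ r ∈ M.component q, r ≠ p := by
      by_contra! h
      exact hC (Set.eq_singleton_iff_unique_mem.2 ⟨hp, h⟩)
    obtain ⟨u, hu⟩ := hp.1.trans hr.2
    obtain ⟨v, hv⟩ := hr.1.trans hp.2
    refine ⟨u ++ v, ?_, by rw [evalFrom_of_append, hu, hv]⟩
    intro huv
    rw [(List.append_eq_nil_iff.1 huv).1] at hu
    exact hrp hu.symm

theorem not_trivialComponent_of_loop {p : σ} {x : List α} (hx : x ≠ [])
    (hpx : M.evalFrom p x = p) : ¬ M.TrivialComponent (M.component p) := by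
  rintro ⟨p', hC, hnoloop⟩
  obtain ⟨a, t, rfl⟩ := List.exists_cons_of_ne_nil hx
  have hstep : M.step p a ∈ M.component p := ⟨⟨t, hpx⟩, ⟨[a], rfl⟩⟩
  obtain rfl : p = p' := by simpa [hC] using M.mem_component_self p
  rw [hC] at hstep
  exact hnoloop a hstep

theorem admitsPg_of_reach {p q : σ} {x : List α} (hpq : p ≠ q) (hx : x ≠ [])
    (hpx : M.evalFrom p x = p) (hqx : M.evalFrom q x = q) (hreach : M.Reach p q) :
    M.AdmitsPg := by
  obtain ⟨y, hy⟩ := hreach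
  refine ⟨p, q, x, y, hpq, hx, ?_, hpx, hqx, hy⟩
  rintro rfl
  exact hpq hy

variable [Finite σ]

theorem isSink_component_of_not_admitsPg (hPg : ¬ M.AdmitsPg) {q : σ}
    (hnt : ¬ M.TrivialComponent (M.component q)) : M.IsSink (M.component q) := by
  intro p hp a
  obtain ⟨x, hx, hpx⟩ := exists_loop_of_not_trivialComponent hp hnt
  obtain ⟨n, hn, hidem⟩ := Function.exists_iterate_idempotent (M.evalFrom · x)
  set w := (List.replicate n x).flatten
  have hw : ∀ s, M.evalFrom s w = (M.evalFrom · x)^[n] s := (evalFrom_flatten_replicate M · x n)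
  have hwp : M.evalFrom p w = p := by
    rw [hw]
    exact Function.iterate_fixed hpx n
  have hws : M.evalFrom (M.evalFrom (M.step p a) w) w = M.evalFrom (M.step p a) w := by
    rw [hw, hw]
    exact hidem _
  have hsp : M.evalFrom (M.step p a) w = p := by
    by_contra hne
    exact hPg (admitsPg_of_reach (Ne.symm hne) (List.flatten_replicate_ne_nil hx hn) hwp hws
      ⟨a :: w, rfl⟩)
  exact ⟨Reach.trans ⟨w, hsp⟩ hp.1, hp.2.trans ⟨[a], rfl⟩⟩

theorem ncard_eq_one_of_not_admitsPg (hPg : ¬ M.AdmitsPg) {u : List α} (hu : u ≠ []) {q : σ}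
    {X : Set σ} (hXC : X ⊆ M.component q) (hX : X.Nonempty)
    (himg : (M.evalFrom · u) '' X = X) : X.ncard = 1 := by
  obtain ⟨n, hn, hidem⟩ := Function.exists_iterate_idempotent (M.evalFrom · u)
  set w := (List.replicate n u).flatten
  have hw : ∀ s, M.evalFrom s w = (M.evalFrom · u)^[n] s := (evalFrom_flatten_replicate M · u n)
  have himg_w : (M.evalFrom · w) '' X = X := by
    rw [funext hw, Set.image_iterate_eq]
    exact Function.iterate_fixed himg n
  have hfix : ∀ p ∈ X, M.evalFrom p w = p := by
    intro p hp
    obtain ⟨r, -, rfl⟩ := himg_w.symm ▸ hp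
    simp only [hw]
    exact hidem r
  obtain ⟨p, hp⟩ := hX
  refine Set.ncard_eq_one.2 ⟨p, Set.eq_singleton_iff_unique_mem.2 ⟨hp, fun r hr => ?_⟩⟩
  by_contra hne
  exact hPg (admitsPg_of_reach hne (List.flatten_replicate_ne_nil hu hn) (hfix r hr) (hfix p hp)
    ((hXC hr).1.trans (hXC hp).2))

end DFA

theorem avoids_Pg_iff_sinks_nonpermutational_general {α σ : Type*} [Finite σ]
    (M : DFA α σ) :
    (¬ M.AdmitsPg) ↔
      ((∀ q : σ, ¬ M.TrivialComponent (M.component q) → M.IsSink (M.component q)) ∧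
       (∀ u : List α, u ≠ [] → ∀ q : σ, M.IsSink (M.component q) →
         ∀ X : Set σ, X ⊆ M.component q → X.Nonempty →
           (fun p => M.evalFrom p u) '' X = X → X.ncard = 1)) := by
  refine ⟨fun hPg => ⟨fun q => M.isSink_component_of_not_admitsPg hPg,
    fun u hu q _ X => M.ncard_eq_one_of_not_admitsPg hPg hu⟩, ?_⟩
  rintro ⟨hsink, hperm⟩ ⟨p, q, x, y, hpq, hx, -, hpx, hqx, hpy⟩
  have hC : M.IsSink (M.component p) := hsink p (M.not_trivialComponent_of_loop hx hpx)
  have hqC : q ∈ M.component p := hpy ▸ hC.evalFrom_mem (M.mem_component_self p) y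
  have hpair := hperm x hx p hC {p, q} (Set.pair_subset (M.mem_component_self p) hqC)
    (Set.insert_nonempty p {q}) (by rw [Set.image_pair, hpx, hqx])
  rw [Set.ncard_pair hpq] at hpair
  omega

/-- A connected, reduced finite automaton avoids the pattern `P_g` iff every
nontrivial component is a sink and, for every nonempty word `u` and every sink
component `C`, the transformation of `C` induced by `u` is nonpermutational
(every nonempty subset of `C` mapped onto itself is a singleton). -/
theorem avoids_Pg_iff_sinks_nonpermutational {α σ : Type*} [Finite α] [Finite σ]
    (M : DFA α σ) (hred : M.Reduced) :
    (¬ M.AdmitsPg) ↔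
      ((∀ q : σ, ¬ M.TrivialComponent (M.component q) → M.IsSink (M.component q)) ∧
       (∀ u : List α, u ≠ [] → ∀ q : σ, M.IsSink (M.component q) →
         ∀ X : Set σ, X ⊆ M.component q → X.Nonempty →
           (fun p => M.evalFrom p u) '' X = X → X.ncard = 1)) :=
  avoids_Pg_iff_sinks_nonpermutational_general M
end
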